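/- arXiv:1207.2080 — 4 statements merged into one kernel-verified Lean document; each statement's English description precedes it below -/
import Mathlib

section
/- Projected information is well defined: if, for some x with p(x) > 0, both q and q′ in C_Y attain inf_{r ∈ C_Y} D(p(·|x)‖r), then Σ_z p(z|x) log q(z) = Σ_z p(z|x) log q′(z). Consequently, for any family (q_x)_{x : p(x)>0} of such minimizers, Σ_{x,z : p(x,z)>0} p(x,z) log(q_x(z)/p_Z(z)) = I_pr(X↘Y;Z), independently of the choice of minimizers. -/
open scoped BigOperators

/-- `p` is a probability mass function on a finite type. -/
def IsPMF {α : Type*} [Fintype α] (p : α → ℝ) : Prop :=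
  (∀ a, 0 ≤ p a) ∧ ∑ a, p a = 1

/-- Kullback–Leibler divergence `D(u‖v) = Σ u log (u/v)` (with the convention `0 log 0 = 0`),
`⊤` if absolute continuity fails, i.e. if `u a > 0 = v a` for some `a`. -/
noncomputable def klDiv {α : Type*} [Fintype α] (u v : α → ℝ) : EReal :=
  if ∀ a, 0 < u a → 0 < v a then ((∑ a, u a * Real.log (u a / v a) : ℝ) : EReal) else ⊤

variable {𝓧 𝓨 𝓩 : Type*} [Fintype 𝓧] [Fintype 𝓨] [Fintype 𝓩]

/-- Marginal distribution of the first variable `X`. -/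
noncomputable def margX (p : 𝓧 × 𝓨 × 𝓩 → ℝ) (x : 𝓧) : ℝ := ∑ y, ∑ z, p (x, y, z)

/-- Marginal distribution of the second variable `Y`. -/
noncomputable def margY (p : 𝓧 × 𝓨 × 𝓩 → ℝ) (y : 𝓨) : ℝ := ∑ x, ∑ z, p (x, y, z)

/-- Marginal distribution of the third variable `Z`. -/
noncomputable def margZ (p : 𝓧 × 𝓨 × 𝓩 → ℝ) (z : 𝓩) : ℝ := ∑ x, ∑ y, p (x, y, z)

/-- Joint marginal `p(x,z)`. -/
noncomputable def margXZ (p : 𝓧 × 𝓨 × 𝓩 → ℝ) (x : 𝓧) (z : 𝓩) : ℝ := ∑ y, p (x, y, z)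

/-- Joint marginal `p(y,z)`. -/
noncomputable def margYZ (p : 𝓧 × 𝓨 × 𝓩 → ℝ) (y : 𝓨) (z : 𝓩) : ℝ := ∑ x, p (x, y, z)

/-- Joint marginal `p(x,y)`. -/
noncomputable def margXY (p : 𝓧 × 𝓨 × 𝓩 → ℝ) (x : 𝓧) (y : 𝓨) : ℝ := ∑ z, p (x, y, z)

/-- Conditional distribution `p(·|x)` of `Z` given `X = x`. -/
noncomputable def condX (p : 𝓧 × 𝓨 × 𝓩 → ℝ) (x : 𝓧) : 𝓩 → ℝ :=
  fun z => margXZ p x z / margX p x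

/-- Conditional distribution `p(·|y)` of `Z` given `Y = y`. -/
noncomputable def condY (p : 𝓧 × 𝓨 × 𝓩 → ℝ) (y : 𝓨) : 𝓩 → ℝ :=
  fun z => margYZ p y z / margY p y

/-- Conditional distribution `p(·|x,y)` of `Z` given `(X,Y) = (x,y)`. -/
noncomputable def condXY (p : 𝓧 × 𝓨 × 𝓩 → ℝ) (x : 𝓧) (y : 𝓨) : 𝓩 → ℝ :=
  fun z => p (x, y, z) / margXY p x y

/-- `C_X`: the convex hull of the conditionals `{p(·|x) : p(x) > 0}`. -/
noncomputable def CXhull (p : 𝓧 × 𝓨 × 𝓩 → ℝ) : Set (𝓩 → ℝ) :=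
  convexHull ℝ {q | ∃ x, 0 < margX p x ∧ q = condX p x}

/-- `C_Y`: the convex hull of the conditionals `{p(·|y) : p(y) > 0}`. -/
noncomputable def CYhull (p : 𝓧 × 𝓨 × 𝓩 → ℝ) : Set (𝓩 → ℝ) :=
  convexHull ℝ {q | ∃ y, 0 < margY p y ∧ q = condY p y}

/-- Mutual information `I(Z;X)` (terms with `p(x,z) = 0` vanish). -/
noncomputable def miZX (p : 𝓧 × 𝓨 × 𝓩 → ℝ) : ℝ :=
  ∑ x, ∑ z, margXZ p x z * Real.log (margXZ p x z / (margX p x * margZ p z))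

/-- Mutual information `I(Z;Y)`. -/
noncomputable def miZY (p : 𝓧 × 𝓨 × 𝓩 → ℝ) : ℝ :=
  ∑ y, ∑ z, margYZ p y z * Real.log (margYZ p y z / (margY p y * margZ p z))

/-- Mutual information `I(Z;X,Y)` between `Z` and the joint variable `(X,Y)`. -/
noncomputable def miZXY (p : 𝓧 × 𝓨 × 𝓩 → ℝ) : ℝ :=
  ∑ x, ∑ y, ∑ z, p (x, y, z) * Real.log (p (x, y, z) / (margXY p x y * margZ p z))

/-- Projected information `I_pr(X ↘ Y; Z) =
`Σ_{x : p(x)>0} p(x)·[D(p(·|x)‖p_Z) − inf_{q ∈ C_Y} D(p(·|x)‖q)]`. -/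
noncomputable def IprXY (p : 𝓧 × 𝓨 × 𝓩 → ℝ) : ℝ :=
  ∑ x, if 0 < margX p x then
      margX p x * ((klDiv (condX p x) (margZ p)).toReal -
        (⨅ q ∈ CYhull p, klDiv (condX p x) q).toReal)
    else 0

/-- Projected information `I_pr(Y ↘ X; Z)`. -/
noncomputable def IprYX (p : 𝓧 × 𝓨 × 𝓩 → ℝ) : ℝ :=
  ∑ y, if 0 < margY p y then
      margY p y * ((klDiv (condY p y) (margZ p)).toReal -
        (⨅ q ∈ CXhull p, klDiv (condY p y) q).toReal)
    else 0

/-- Redundant information `I_red(Z;X,Y) = min {I_pr(X↘Y;Z), I_pr(Y↘X;Z)}`. -/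
noncomputable def Ired (p : 𝓧 × 𝓨 × 𝓩 → ℝ) : ℝ := min (IprXY p) (IprYX p)

section Aux

lemma klDiv_eq_of_ac {α : Type*} [Fintype α] {u v : α → ℝ}
    (h : ∀ a, 0 < u a → 0 < v a) :
    klDiv u v = ((∑ a, u a * Real.log (u a / v a) : ℝ) : EReal) := if_pos h

lemma ac_of_klDiv_ne_top {α : Type*} [Fintype α] {u v : α → ℝ}
    (h : klDiv u v ≠ ⊤) : ∀ a, 0 < u a → 0 < v a := by
  by_contra hc
  exact h (if_neg hc)

lemma sum_log_div_split {α : Type*} [Fintype α] {u v : α → ℝ}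
    (hu : ∀ a, 0 ≤ u a) (h : ∀ a, 0 < u a → 0 < v a) :
    ∑ a, u a * Real.log (u a / v a)
      = ∑ a, u a * Real.log (u a) - ∑ a, u a * Real.log (v a) := by
  rw [← Finset.sum_sub_distrib]
  refine Finset.sum_congr rfl fun a _ => ?_
  rcases eq_or_lt_of_le (hu a) with h0 | h0
  · simp [← h0]
  · rw [Real.log_div (ne_of_gt h0) (ne_of_gt (h a h0)), mul_sub]

variable {p : 𝓧 × 𝓨 × 𝓩 → ℝ}

lemma margXZ_nonneg (hp : IsPMF p) (x : 𝓧) (z : 𝓩) : 0 ≤ margXZ p x z :=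
  Finset.sum_nonneg fun _ _ => hp.1 _

lemma margYZ_nonneg (hp : IsPMF p) (y : 𝓨) (z : 𝓩) : 0 ≤ margYZ p y z :=
  Finset.sum_nonneg fun _ _ => hp.1 _

lemma margX_eq_sum (x : 𝓧) : margX p x = ∑ z, margXZ p x z := Finset.sum_comm

lemma margY_eq_sum (y : 𝓨) : margY p y = ∑ z, margYZ p y z := Finset.sum_comm

lemma margZ_eq_sumX (z : 𝓩) : margZ p z = ∑ x, margXZ p x z := rfl

lemma margZ_eq_sumY (z : 𝓩) : margZ p z = ∑ y, margYZ p y z := Finset.sum_comm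

lemma margXZ_le_margZ (hp : IsPMF p) (x : 𝓧) (z : 𝓩) : margXZ p x z ≤ margZ p z := by
  rw [margZ_eq_sumX]
  exact Finset.single_le_sum (f := fun x' => margXZ p x' z)
    (fun x' _ => margXZ_nonneg hp x' z) (Finset.mem_univ x)

lemma margYZ_le_margY (hp : IsPMF p) (y : 𝓨) (z : 𝓩) : margYZ p y z ≤ margY p y := by
  rw [margY_eq_sum]
  exact Finset.single_le_sum (f := fun z' => margYZ p y z')
    (fun z' _ => margYZ_nonneg hp y z') (Finset.mem_univ z)

lemma condX_nonneg (hp : IsPMF p) (x : 𝓧) (z : 𝓩) : 0 ≤ condX p x z :=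
  div_nonneg (margXZ_nonneg hp x z) (by
    rw [margX_eq_sum]; exact Finset.sum_nonneg fun z' _ => margXZ_nonneg hp x z')

lemma condX_ac_margZ (hp : IsPMF p) (x : 𝓧) :
    ∀ z, 0 < condX p x z → 0 < margZ p z := by
  intro z hz
  have h1 : 0 < margXZ p x z := by
    by_contra h
    have : margXZ p x z = 0 := le_antisymm (not_lt.1 h) (margXZ_nonneg hp x z)
    simp [condX, this] at hz
  exact lt_of_lt_of_le h1 (margXZ_le_margZ hp x z)

lemma sum_margY (hp : IsPMF p) : ∑ y, margY p y = 1 := by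
  have h2 := hp.2
  rw [Fintype.sum_prod_type] at h2
  simp_rw [Fintype.sum_prod_type] at h2
  rw [← h2]
  exact Finset.sum_comm

lemma margZ_mem_CYhull (hp : IsPMF p) : margZ p ∈ CYhull p := by
  classical
  set t : Finset 𝓨 := Finset.univ.filter fun y => 0 < margY p y with ht
  have hnn : ∀ y, 0 ≤ margY p y := by
    intro y
    rw [margY_eq_sum]
    exact Finset.sum_nonneg fun z _ => margYZ_nonneg hp y z
  have hsum : ∑ y ∈ t, margY p y = 1 := by
    rw [ht, Finset.sum_filter_of_ne
      (fun y _ hy => lt_of_le_of_ne (hnn y) (Ne.symm hy))]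
    exact sum_margY hp
  have hmem : t.centerMass (margY p) (condY p) ∈ CYhull p := by
    refine Finset.centerMass_mem_convexHull t (fun y hy => hnn y) (by rw [hsum]; norm_num)
      (fun y hy => ?_)
    exact ⟨y, (Finset.mem_filter.1 hy).2, rfl⟩
  have heq : t.centerMass (margY p) (condY p) = margZ p := by
    rw [Finset.centerMass_eq_of_sum_1 _ _ hsum]
    funext z
    rw [Finset.sum_apply]
    have h1 : ∑ y ∈ t, (margY p y • condY p y) z = ∑ y ∈ t, margYZ p y z := by
      refine Finset.sum_congr rfl fun y hy => ?_
      have hpos : 0 < margY p y := (Finset.mem_filter.1 hy).2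
      simp only [Pi.smul_apply, smul_eq_mul, condY]
      field_simp
    rw [h1, ht, Finset.sum_filter_of_ne (fun y _ hy =>
      lt_of_lt_of_le (lt_of_le_of_ne (margYZ_nonneg hp y z) (Ne.symm hy))
        (margYZ_le_margY hp y z)), ← margZ_eq_sumY]
  rwa [heq] at hmem

lemma iInf_klDiv_ne_top (hp : IsPMF p) (x : 𝓧) :
    (⨅ r ∈ CYhull p, klDiv (condX p x) r) ≠ ⊤ := by
  have hle : (⨅ r ∈ CYhull p, klDiv (condX p x) r) ≤ klDiv (condX p x) (margZ p) :=
    iInf₂_le (margZ p) (margZ_mem_CYhull hp)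
  rw [klDiv_eq_of_ac (condX_ac_margZ hp x)] at hle
  exact ne_top_of_le_ne_top (EReal.coe_ne_top _) hle

end Aux

/-- Projected information is well defined: any two minimizers `q, q'` of
`D(p(·|x)‖·)` over `C_Y` give the same value `Σ_z p(z|x) log q(z)`, and for any family of
minimizers `(q_x)` one has `Σ_{x,z} p(x,z) log (q_x(z)/p_Z(z)) = I_pr(X↘Y;Z)`
(terms with `p(x,z) = 0` vanish). -/
theorem projected_information_well_defined
    [Nonempty 𝓧] [Nonempty 𝓨] [Nonempty 𝓩]
    (p : 𝓧 × 𝓨 × 𝓩 → ℝ) (hp : IsPMF p) :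
    (∀ x, 0 < margX p x → ∀ q q', q ∈ CYhull p → q' ∈ CYhull p →
        klDiv (condX p x) q = (⨅ r ∈ CYhull p, klDiv (condX p x) r) →
        klDiv (condX p x) q' = (⨅ r ∈ CYhull p, klDiv (condX p x) r) →
        ∑ z, condX p x z * Real.log (q z) = ∑ z, condX p x z * Real.log (q' z)) ∧
    ∀ qf : 𝓧 → 𝓩 → ℝ,
      (∀ x, 0 < margX p x → qf x ∈ CYhull p ∧
          klDiv (condX p x) (qf x) = ⨅ r ∈ CYhull p, klDiv (condX p x) r) →
      ∑ x, ∑ z, margXZ p x z * Real.log (qf x z / margZ p z) = IprXY p := by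
  constructor
  · intro x hx q q' hq hq' heq heq'
    have hBne : (⨅ r ∈ CYhull p, klDiv (condX p x) r) ≠ ⊤ := iInf_klDiv_ne_top hp x
    have hacq : ∀ z, 0 < condX p x z → 0 < q z :=
      ac_of_klDiv_ne_top (heq ▸ hBne)
    have hacq' : ∀ z, 0 < condX p x z → 0 < q' z :=
      ac_of_klDiv_ne_top (heq' ▸ hBne)
    have h2 : klDiv (condX p x) q = klDiv (condX p x) q' := heq.trans heq'.symm
    rw [klDiv_eq_of_ac hacq, klDiv_eq_of_ac hacq', EReal.coe_eq_coe_iff] at h2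
    rw [sum_log_div_split (condX_nonneg hp x) hacq,
        sum_log_div_split (condX_nonneg hp x) hacq'] at h2
    linarith
  · intro qf hqf
    rw [IprXY]
    refine Finset.sum_congr rfl fun x _ => ?_
    by_cases hx : 0 < margX p x
    · rw [if_pos hx]
      obtain ⟨hmem, hmin⟩ := hqf x hx
      have hBne : (⨅ r ∈ CYhull p, klDiv (condX p x) r) ≠ ⊤ := iInf_klDiv_ne_top hp x
      have hacq : ∀ z, 0 < condX p x z → 0 < qf x z :=
        ac_of_klDiv_ne_top (hmin ▸ hBne)
      have hacZ := condX_ac_margZ hp x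
      rw [← hmin, klDiv_eq_of_ac hacq, klDiv_eq_of_ac hacZ, EReal.toReal_coe,
        EReal.toReal_coe, sum_log_div_split (condX_nonneg hp x) hacq,
        sum_log_div_split (condX_nonneg hp x) hacZ]
      have hrw : margX p x * ((∑ z, condX p x z * Real.log (condX p x z) -
            ∑ z, condX p x z * Real.log (margZ p z)) -
          (∑ z, condX p x z * Real.log (condX p x z) -
            ∑ z, condX p x z * Real.log (qf x z)))
          = ∑ z, (margX p x * (condX p x z * Real.log (qf x z))
              - margX p x * (condX p x z * Real.log (margZ p z))) := by
        rw [Finset.sum_sub_distrib, ← Finset.mul_sum, ← Finset.mul_sum]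
        ring
      rw [hrw]
      refine Finset.sum_congr rfl fun z _ => ?_
      have hcond : margX p x * condX p x z = margXZ p x z := by
        rw [condX]; field_simp
      rcases eq_or_lt_of_le (margXZ_nonneg hp x z) with h0 | h0
      · have hc : condX p x z = 0 := by rw [condX, ← h0, zero_div]
        rw [← h0, hc]; ring
      · have hcz : 0 < condX p x z := div_pos h0 hx
        rw [Real.log_div (ne_of_gt (hacq z hcz)) (ne_of_gt (hacZ z hcz)),
          ← mul_assoc, ← mul_assoc, hcond]
        ring
    · rw [if_neg hx]
      have hX0 : margX p x = 0 := le_antisymm (not_lt.1 hx) (by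
        rw [margX_eq_sum]; exact Finset.sum_nonneg fun z _ => margXZ_nonneg hp x z)
      refine Finset.sum_eq_zero fun z _ => ?_
      have : margXZ p x z = 0 := by
        have := (Finset.sum_eq_zero_iff_of_nonneg
          (fun z' (_ : z' ∈ Finset.univ) => margXZ_nonneg hp x z')).1
          (by rw [← margX_eq_sum]; exact hX0) z (Finset.mem_univ z)
        exact this
      rw [this, zero_mul]
end

section
/- Identity property: let p be a probability mass function on 𝒳 × 𝒴 and let Z = (X,Y) be the copy of the pair, i.e. the joint distribution on 𝒳 × 𝒴 × (𝒳×𝒴) given by p̂(x,y,(x',y')) = p(x,y)·1[(x',y') = (x,y)]. Then I_pr(X↘Y;Z) = I_pr(Y↘X;Z) = I(X;Y), and hence I_red((X,Y);X,Y) = I(X;Y). -/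
open scoped BigOperators

variable {𝓧 𝓨 𝓩 : Type*} [Fintype 𝓧] [Fintype 𝓨] [Fintype 𝓩]

/-- Marginal `p(x)` of a bivariate pmf. -/
noncomputable def marg2X {𝓧 𝓨 : Type*} [Fintype 𝓧] [Fintype 𝓨] (p : 𝓧 × 𝓨 → ℝ) (x : 𝓧) : ℝ :=
  ∑ y, p (x, y)

/-- Marginal `p(y)` of a bivariate pmf. -/
noncomputable def marg2Y {𝓧 𝓨 : Type*} [Fintype 𝓧] [Fintype 𝓨] (p : 𝓧 × 𝓨 → ℝ) (y : 𝓨) : ℝ :=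
  ∑ x, p (x, y)

/-- Mutual information `I(X;Y)` of a bivariate pmf. -/
noncomputable def miXY2 {𝓧 𝓨 : Type*} [Fintype 𝓧] [Fintype 𝓨] (p : 𝓧 × 𝓨 → ℝ) : ℝ :=
  ∑ x, ∑ y, p (x, y) * Real.log (p (x, y) / (marg2X p x * marg2Y p y))

/-- The copy joint `p̂` on `𝓧 × 𝓨 × (𝓧 × 𝓨)`: `p̂(x,y,(x',y')) = p(x,y)·1[(x',y') = (x,y)]`. -/
noncomputable def copyJoint {𝓧 𝓨 : Type*} [DecidableEq 𝓧] [DecidableEq 𝓨]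
    (p : 𝓧 × 𝓨 → ℝ) : 𝓧 × 𝓨 × (𝓧 × 𝓨) → ℝ :=
  fun t => if t.2.2 = (t.1, t.2.1) then p (t.1, t.2.1) else 0

/-!
For the copy `Z = (X,Y)`, the conditional `p̂(·|x)` is `p(·|x)` placed on the fibre `{x} × 𝓨`,
and every element of `C_Y` has the form `q(x',y) = l(y)·p(x'|y)` for a distribution `l` on `𝓨`.
On the fibre, `D(p̂(·|x) ‖ q) = D(p(·|x) ‖ l) + Σ_y p(y|x) log (p(y)/p(x,y))`, so by Gibbs'
inequality the infimum over `C_Y` is attained at `l = p(·|x)`. Subtracting it from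
`D(p̂(·|x) ‖ p) = -log p(x)` and averaging over `x` gives `I(X;Y)`. The other projection is the
same computation after swapping `X` with `Y` and the two coordinates of `Z`.
-/

open Finset Real

section KullbackLeibler

variable {ι α β : Type*} [Fintype ι] [Fintype α] [Fintype β]

lemma klDiv_of_forall_pos {u v : ι → ℝ} (h : ∀ i, 0 < u i → 0 < v i) :
    klDiv u v = ((∑ i, u i * log (u i / v i) : ℝ) : EReal) :=
  if_pos h

lemma klDiv_comp_equiv (σ : α ≃ β) (u v : β → ℝ) : klDiv (u ∘ σ) (v ∘ σ) = klDiv u v :=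
  if_congr (σ.forall_congr fun {_} => Iff.rfl)
    (by rw [← σ.sum_comp fun b => u b * log (u b / v b)]; rfl) rfl

lemma klDiv_ite_fst_eq [DecidableEq α] (a : α) (u : β → ℝ) (v : α × β → ℝ) :
    klDiv (fun z => if z.1 = a then u z.2 else 0) v = klDiv u (fun b => v (a, b)) := by
  have hpos : (∀ z : α × β, 0 < (if z.1 = a then u z.2 else 0) → 0 < v z) ↔
      ∀ b, 0 < u b → 0 < v (a, b) := by
    refine ⟨fun h b hb => h (a, b) (by simpa using hb), ?_⟩
    rintro h ⟨a', b⟩ hz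
    split_ifs at hz with ha
    · subst ha
      exact h b hz
    · exact absurd hz (lt_irrefl 0)
  refine if_congr hpos ?_ rfl
  rw [Fintype.sum_prod_type, sum_eq_single a] <;> simp +contextual

lemma sum_mul_log_div_nonneg {w l : ι → ℝ} (hw : ∀ i, 0 ≤ w i) (hl : ∀ i, 0 ≤ l i)
    (hsum : ∑ i, l i ≤ ∑ i, w i) (hwl : ∀ i, 0 < w i → 0 < l i) :
    0 ≤ ∑ i, w i * log (w i / l i) := by
  have hterm : ∀ i, w i - l i ≤ w i * log (w i / l i) := by
    intro i
    rcases (hw i).eq_or_lt with hwi | hwi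
    · simp [← hwi, hl i]
    · have hli := hwl i hwi
      calc w i - l i = w i * (1 - (w i / l i)⁻¹) := by field_simp
        _ ≤ w i * log (w i / l i) :=
          mul_le_mul_of_nonneg_left (one_sub_inv_le_log_of_pos (by positivity)) hwi.le
  have := sum_le_sum fun i (_ : i ∈ univ) => hterm i
  rw [sum_sub_distrib] at this
  linarith

lemma klDiv_mul_le_klDiv_mul {w l : ι → ℝ} (c : ι → ℝ) (hw : ∀ i, 0 ≤ w i)
    (hl : ∀ i, 0 ≤ l i) (hsum : ∑ i, l i ≤ ∑ i, w i) :
    klDiv w (fun i => w i * c i) ≤ klDiv w (fun i => l i * c i) := by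
  by_cases hac : ∀ i, 0 < w i → 0 < l i * c i
  · have hlc : ∀ i, 0 < w i → 0 < l i ∧ 0 < c i := fun i hi =>
      (pos_and_pos_or_neg_and_neg_of_mul_pos (hac i hi)).resolve_right
        fun h => (hl i).not_gt h.1
    rw [klDiv_of_forall_pos hac, klDiv_of_forall_pos fun i hi => mul_pos hi (hlc i hi).2,
      EReal.coe_le_coe_iff]
    have hsplit : ∀ i, w i * log (w i / (l i * c i)) =
        w i * log (w i / (w i * c i)) + w i * log (w i / l i) := by
      intro i
      rcases (hw i).eq_or_lt with hwi | hwi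
      · simp [← hwi]
      · obtain ⟨hli, hci⟩ := hlc i hwi
        rw [← mul_add, ← log_mul (by positivity) (by positivity)]
        congr 2
        field_simp
    rw [sum_congr rfl fun i _ => hsplit i, sum_add_distrib]
    linarith [sum_mul_log_div_nonneg hw hl hsum fun i hi => (hlc i hi).1]
  · have htop : klDiv w (fun i => l i * c i) = ⊤ := if_neg hac
    exact htop ▸ le_top

end KullbackLeibler

section ProjectedInformation

variable {𝓩' : Type*} [Fintype 𝓩']

lemma IprYX_eq_IprXY_swap (r : 𝓧 × 𝓨 × 𝓩 → ℝ) :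
    IprYX r = IprXY (fun t : 𝓨 × 𝓧 × 𝓩 => r (t.2.1, t.1, t.2.2)) := by
  have hZ : margZ (fun t : 𝓨 × 𝓧 × 𝓩 => r (t.2.1, t.1, t.2.2)) = margZ r :=
    funext fun _ => sum_comm
  rw [IprXY, hZ]
  rfl

lemma IprXY_comp_equiv (r : 𝓧 × 𝓨 × 𝓩 → ℝ) (σ : 𝓩' ≃ 𝓩) :
    IprXY (fun t : 𝓧 × 𝓨 × 𝓩' => r (t.1, t.2.1, σ t.2.2)) = IprXY r := by
  set r' : 𝓧 × 𝓨 × 𝓩' → ℝ := fun t => r (t.1, t.2.1, σ t.2.2)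
  have hX : margX r' = margX r :=
    funext fun x => sum_congr rfl fun y _ => σ.sum_comp fun z => r (x, y, z)
  have hY : margY r' = margY r :=
    funext fun y => sum_congr rfl fun x _ => σ.sum_comp fun z => r (x, y, z)
  have hcondX : ∀ x, condX r' x = condX r x ∘ σ := fun x => by
    funext z
    simp only [condX, hX]
    rfl
  have hcondY : ∀ y, condY r' y = condY r y ∘ σ := fun y => by
    funext z
    simp only [condY, hY]
    rfl
  have hZ : margZ r' = margZ r ∘ σ := rfl
  have hhull : CYhull r' = LinearMap.funLeft ℝ ℝ σ '' CYhull r := by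
    rw [CYhull, CYhull, LinearMap.image_convexHull]
    congr 1
    ext q
    simp only [Set.mem_ofPred_eq, Set.mem_image, hY, hcondY]
    constructor
    · rintro ⟨y, hy, rfl⟩
      exact ⟨condY r y, ⟨y, hy, rfl⟩, rfl⟩
    · rintro ⟨_, ⟨y, hy, rfl⟩, rfl⟩
      exact ⟨y, hy, rfl⟩
  simp only [IprXY, hX, hcondX, hZ, hhull, iInf_image]
  congr! with x _ _ q
  · exact klDiv_comp_equiv σ _ _
  · exact klDiv_comp_equiv σ (condX r x) q

end ProjectedInformation

noncomputable def cond2X (p : 𝓧 × 𝓨 → ℝ) (x : 𝓧) (y : 𝓨) : ℝ := p (x, y) / marg2X p x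

lemma le_marg2X {p : 𝓧 × 𝓨 → ℝ} (hp : ∀ t, 0 ≤ p t) (x : 𝓧) (y : 𝓨) : p (x, y) ≤ marg2X p x :=
  single_le_sum (fun y _ => hp (x, y)) (mem_univ y)

lemma le_marg2Y {p : 𝓧 × 𝓨 → ℝ} (hp : ∀ t, 0 ≤ p t) (x : 𝓧) (y : 𝓨) : p (x, y) ≤ marg2Y p y :=
  single_le_sum (fun x _ => hp (x, y)) (mem_univ x)

lemma cond2X_nonneg {p : 𝓧 × 𝓨 → ℝ} (hp : ∀ t, 0 ≤ p t) (x : 𝓧) (y : 𝓨) : 0 ≤ cond2X p x y :=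
  div_nonneg (hp _) ((hp _).trans (le_marg2X hp x y))

lemma sum_cond2X {p : 𝓧 × 𝓨 → ℝ} {x : 𝓧} (hx : marg2X p x ≠ 0) : ∑ y, cond2X p x y = 1 := by
  simp only [cond2X, ← sum_div]
  exact div_self hx

section CopyJoint

variable [DecidableEq 𝓧] [DecidableEq 𝓨] (p : 𝓧 × 𝓨 → ℝ)

lemma margX_copyJoint : margX (copyJoint p) = marg2X p := by
  funext x
  simp [margX, copyJoint, marg2X]

lemma margY_copyJoint : margY (copyJoint p) = marg2Y p := by
  funext y
  simp [margY, copyJoint, marg2Y]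

lemma margZ_copyJoint : margZ (copyJoint p) = p := by
  funext z
  simp only [margZ, copyJoint, Prod.ext_iff]
  rw [sum_eq_single z.1, sum_eq_single z.2] <;> simp +contextual [eq_comm]

lemma condX_copyJoint (x : 𝓧) :
    condX (copyJoint p) x = fun z => if z.1 = x then cond2X p x z.2 else 0 := by
  funext ⟨x', y'⟩
  by_cases h : x' = x
  · subst h
    simp [condX, margXZ, copyJoint, margX_copyJoint, cond2X]
  · simp [condX, margXZ, copyJoint, h]

lemma condY_copyJoint (y : 𝓨) :
    condY (copyJoint p) y = fun z => if z.2 = y then p z / marg2Y p y else 0 := by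
  funext ⟨x', y'⟩
  by_cases h : y' = y
  · subst h
    simp [condY, margYZ, copyJoint, margY_copyJoint]
  · simp [condY, margYZ, copyJoint, h]

lemma CYhull_copyJoint_subset :
    CYhull (copyJoint p) ⊆ (fun l z => l z.2 * (p z / marg2Y p z.2)) '' stdSimplex ℝ 𝓨 := by
  refine convexHull_min ?_ ((convex_stdSimplex ℝ 𝓨).is_linear_image ?_)
  · rintro _ ⟨y, -, rfl⟩
    refine ⟨Pi.single y 1, single_mem_stdSimplex ℝ y, ?_⟩
    rw [condY_copyJoint]
    funext z
    by_cases h : z.2 = y <;> simp [h]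
  · constructor <;> intros <;> funext z <;>
      simp only [Pi.add_apply, Pi.smul_apply, smul_eq_mul] <;> ring

lemma mem_CYhull_copyJoint {l : 𝓨 → ℝ} (hl : l ∈ stdSimplex ℝ 𝓨)
    (hsupp : ∀ y, 0 < l y → 0 < marg2Y p y) :
    (fun z => l z.2 * (p z / marg2Y p z.2)) ∈ CYhull (copyJoint p) := by
  set t := univ.filter fun y => 0 < marg2Y p y
  have hsum : ∑ y ∈ t, l y • condY (copyJoint p) y = ∑ y, l y • condY (copyJoint p) y :=
    sum_filter_of_ne fun y _ h => hsupp y ((hl.1 y).lt_of_ne' (left_ne_zero_of_smul h))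
  have hl1 : ∑ y ∈ t, l y = 1 :=
    (sum_filter_of_ne fun y _ h => hsupp y ((hl.1 y).lt_of_ne' h)).trans hl.2
  have heq : (fun z => l z.2 * (p z / marg2Y p z.2)) = ∑ y ∈ t, l y • condY (copyJoint p) y := by
    rw [hsum]
    funext z
    simp [Finset.sum_apply, condY_copyJoint]
  rw [heq]
  exact (convex_convexHull ℝ _).sum_mem (fun y _ => hl.1 y) hl1
    fun y hy => subset_convexHull ℝ _ ⟨y, margY_copyJoint p ▸ (mem_filter.1 hy).2, rfl⟩

variable {p}

lemma iInf_klDiv_condX_copyJoint (hp : ∀ t, 0 ≤ p t) {x : 𝓧} (hx : 0 < marg2X p x) :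
    ⨅ q ∈ CYhull (copyJoint p), klDiv (condX (copyJoint p) x) q =
      klDiv (cond2X p x) fun y => cond2X p x y * (p (x, y) / marg2Y p y) := by
  have hw : cond2X p x ∈ stdSimplex ℝ 𝓨 := ⟨cond2X_nonneg hp x, sum_cond2X hx.ne'⟩
  refine le_antisymm ?_ (le_iInf₂ fun q hq => ?_)
  · refine (iInf₂_le _ (mem_CYhull_copyJoint p hw fun y hy => ?_)).trans_eq ?_
    · exact ((div_pos_iff_of_pos_right hx).1 hy).trans_le (le_marg2Y hp x y)
    · rw [condX_copyJoint, klDiv_ite_fst_eq]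
  · obtain ⟨l, hl, rfl⟩ := CYhull_copyJoint_subset p hq
    rw [condX_copyJoint, klDiv_ite_fst_eq]
    exact klDiv_mul_le_klDiv_mul _ (cond2X_nonneg hp x) hl.1 (by rw [hl.2, hw.2])

lemma IprXY_copyJoint (hp : ∀ t, 0 ≤ p t) : IprXY (copyJoint p) = miXY2 p := by
  refine sum_congr rfl fun x _ => ?_
  rw [margX_copyJoint]
  split_ifs with hx
  · have hpos : ∀ y, 0 < cond2X p x y → 0 < p (x, y) := fun y hy =>
      (div_pos_iff_of_pos_right hx).1 hy
    have hpos' : ∀ y, 0 < cond2X p x y → 0 < cond2X p x y * (p (x, y) / marg2Y p y) :=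
      fun y hy => mul_pos hy (div_pos (hpos y hy) ((hpos y hy).trans_le (le_marg2Y hp x y)))
    rw [margZ_copyJoint, iInf_klDiv_condX_copyJoint hp hx, condX_copyJoint, klDiv_ite_fst_eq,
      klDiv_of_forall_pos hpos, klDiv_of_forall_pos hpos', EReal.toReal_coe, EReal.toReal_coe,
      ← sum_sub_distrib, mul_sum]
    refine sum_congr rfl fun y _ => ?_
    rcases (hp (x, y)).eq_or_lt with h | h
    · simp [cond2X, ← h]
    · have hy := h.trans_le (le_marg2Y hp x y)
      simp only [cond2X]
      rw [← mul_sub, ← log_div (by positivity) (by positivity)]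
      field_simp
  · have hx0 : marg2X p x = 0 := le_antisymm (not_lt.1 hx) (sum_nonneg fun y _ => hp (x, y))
    exact (sum_eq_zero fun y _ => by
      rw [le_antisymm (hx0 ▸ le_marg2X hp x y) (hp _), zero_mul]).symm

end CopyJoint

lemma miXY2_comp_swap (p : 𝓧 × 𝓨 → ℝ) : miXY2 (p ∘ Prod.swap) = miXY2 p := by
  rw [miXY2, sum_comm]
  refine sum_congr rfl fun x _ => sum_congr rfl fun y _ => ?_
  simp only [marg2X, marg2Y, Function.comp_apply, Prod.swap_prod_mk, mul_comm (∑ x', p (x', y))]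

lemma copyJoint_comp_swap {α β : Type*} [DecidableEq α] [DecidableEq β] (p : α × β → ℝ) :
    (fun t : β × α × (α × β) => copyJoint p (t.2.1, t.1, t.2.2)) =
      fun t => copyJoint (p ∘ Prod.swap) (t.1, t.2.1, Equiv.prodComm α β t.2.2) := by
  funext ⟨y, x, z⟩
  simp [copyJoint, Prod.swap_eq_iff_eq_swap]

theorem identity_property_general
    {𝓧 𝓨 : Type*} [Fintype 𝓧] [Fintype 𝓨] [DecidableEq 𝓧] [DecidableEq 𝓨]
    (p : 𝓧 × 𝓨 → ℝ) (hp : IsPMF p) :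
    IprXY (copyJoint p) = miXY2 p ∧
      IprYX (copyJoint p) = miXY2 p ∧
      Ired (copyJoint p) = miXY2 p := by
  have hXY : IprXY (copyJoint p) = miXY2 p := IprXY_copyJoint hp.1
  have hYX : IprYX (copyJoint p) = miXY2 p := by
    rw [IprYX_eq_IprXY_swap, copyJoint_comp_swap, IprXY_comp_equiv,
      IprXY_copyJoint (p := p ∘ Prod.swap) fun t => hp.1 t.swap, miXY2_comp_swap]
  exact ⟨hXY, hYX, by rw [Ired, hXY, hYX, min_self]⟩

/-- Identity property: for the copy mechanism `Z = (X,Y)`,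
`I_pr(X↘Y;Z) = I_pr(Y↘X;Z) = I(X;Y)`, hence `I_red((X,Y);X,Y) = I(X;Y)`. -/
theorem identity_property
    {𝓧 𝓨 : Type*} [Fintype 𝓧] [Fintype 𝓨] [DecidableEq 𝓧] [DecidableEq 𝓨]
    [Nonempty 𝓧] [Nonempty 𝓨]
    (p : 𝓧 × 𝓨 → ℝ) (hp : IsPMF p) :
    IprXY (copyJoint p) = miXY2 p ∧
      IprYX (copyJoint p) = miXY2 p ∧
      Ired (copyJoint p) = miXY2 p :=
  identity_property_general p hp
end

section
/- Convexity step: Σ_{x,y : p(x,y)>0} p(x,y)·D(p(·|x,y)‖p(·|y)) ≥ Σ_{x : p(x)>0} p(x)·D(p(·|x)‖r_x), where r_x = Σ_{y : p(y|x)>0} p(y|x)·p(·|y); moreover r_x ∈ C_Y for every x with p(x) > 0, so I(Z;X,Y) − I(Z;Y) ≥ Σ_{x : p(x)>0} p(x)·inf_{q ∈ C_Y} D(p(·|x)‖q). -/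
open scoped BigOperators

variable {𝓧 𝓨 𝓩 : Type*} [Fintype 𝓧] [Fintype 𝓨] [Fintype 𝓩]

/-- The mixture `r_x = Σ_{y : p(y|x)>0} p(y|x)·p(·|y)`. -/
noncomputable def rmix (p : 𝓧 × 𝓨 × 𝓩 → ℝ) (x : 𝓧) : 𝓩 → ℝ :=
  fun z => ∑ y, if 0 < margXY p x y then (margXY p x y / margX p x) * condY p y z else 0

/-!
For fixed `x` and `z`, the log-sum inequality applied to the numbers `p(x,y,z)` and
`p(x,y) p(z|y)` (which sum over `y` to `p(x,z)` and `p(x) r_x(z)`) gives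
`p(x,z) log (p(z|x) / r_x(z)) ≤ Σ_y p(x,y,z) log (p(z|x,y) / p(z|y))`; summing over `x, z`
yields the first inequality. The mixture `r_x` has weights `p(y|x)` on the points `p(·|y)`,
so it lies in `C_Y`, and the right-hand side is the conditional mutual information
`I(Z;X|Y) = I(Z;X,Y) − I(Z;Y)` (chain rule).
-/

open Finset

namespace EReal

@[simp, norm_cast]
lemma coe_finset_sum {ι : Type*} (s : Finset ι) (f : ι → ℝ) :
    ((∑ i ∈ s, f i : ℝ) : EReal) = ∑ i ∈ s, (f i : EReal) :=
  map_sum (⟨⟨Real.toEReal, coe_zero⟩, coe_add⟩ : ℝ →+ EReal) f s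

end EReal

namespace Real

lemma sub_mul_le_mul_log_div_mul {a b c : ℝ} (ha : 0 ≤ a) (hb : 0 ≤ b) (hc : 0 < c)
    (hab : 0 < a → 0 < b) : a - b * c ≤ a * log (a / (b * c)) := by
  rcases ha.eq_or_lt with rfl | ha
  · simpa using mul_nonneg hb hc.le
  have hbc : 0 < b * c := mul_pos (hab ha) hc
  calc a - b * c = a * (1 - (a / (b * c))⁻¹) := by field_simp
    _ ≤ a * log (a / (b * c)) :=
      mul_le_mul_of_nonneg_left (one_sub_inv_le_log_of_pos (div_pos ha hbc)) ha.le

/-- The log-sum inequality. -/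
theorem sum_mul_log_div_sum_le {ι : Type*} (s : Finset ι) {a b : ι → ℝ}
    (ha : ∀ i ∈ s, 0 ≤ a i) (hb : ∀ i ∈ s, 0 ≤ b i) (hab : ∀ i ∈ s, 0 < a i → 0 < b i) :
    (∑ i ∈ s, a i) * log ((∑ i ∈ s, a i) / ∑ i ∈ s, b i) ≤ ∑ i ∈ s, a i * log (a i / b i) := by
  rcases (sum_nonneg ha).eq_or_lt with hA | hA
  · rw [← hA, zero_mul]
    exact sum_nonneg fun i hi => by rw [(sum_eq_zero_iff_of_nonneg ha).1 hA.symm i hi, zero_mul]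
  set A := ∑ i ∈ s, a i
  set B := ∑ i ∈ s, b i
  obtain ⟨j, hj, haj⟩ := (sum_pos_iff_of_nonneg ha).1 hA
  have hB : 0 < B := (hab j hj haj).trans_le (single_le_sum hb hj)
  have hsplit : ∀ i ∈ s,
      a i * log (a i / (b i * (A / B))) = a i * log (a i / b i) - a i * log (A / B) := by
    intro i hi
    rcases (ha i hi).eq_or_lt with h0 | hpos
    · simp [← h0]
    rw [← div_div, log_div (div_pos hpos (hab i hi hpos)).ne' (div_pos hA hB).ne', mul_sub]
  have key := sum_le_sum fun i hi =>
    sub_mul_le_mul_log_div_mul (ha i hi) (hb i hi) (div_pos hA hB) (hab i hi)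
  rw [sum_sub_distrib, ← sum_mul, sum_congr rfl hsplit, sum_sub_distrib, ← sum_mul,
    mul_div_cancel₀ _ hB.ne', sub_self] at key
  linarith

end Real

lemma coe_mul_klDiv_div_eq {α : Type*} [Fintype α] {c : ℝ} (hc : 0 < c) {w v : α → ℝ}
    (hac : ∀ a, 0 < w a → 0 < v a) :
    (c : EReal) * klDiv (fun a => w a / c) v = ((∑ a, w a * Real.log (w a / (c * v a)) : ℝ)) := by
  rw [klDiv, if_pos fun a ha => hac a ((div_pos_iff_of_pos_right hc).1 ha), ← EReal.coe_mul,
    mul_sum]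
  congr 2 with a
  rw [div_div, ← mul_assoc, mul_div_cancel₀ _ hc.ne']

section JointPMF

variable {p : 𝓧 × 𝓨 × 𝓩 → ℝ}

omit [Fintype 𝓧] [Fintype 𝓨] in
lemma margXY_nonneg (hp : ∀ a, 0 ≤ p a) (x : 𝓧) (y : 𝓨) : 0 ≤ margXY p x y :=
  sum_nonneg fun _ _ => hp _

omit [Fintype 𝓨] in
lemma condY_nonneg (hp : ∀ a, 0 ≤ p a) (y : 𝓨) (z : 𝓩) : 0 ≤ condY p y z :=
  div_nonneg (sum_nonneg fun _ _ => hp _) (sum_nonneg fun _ _ => sum_nonneg fun _ _ => hp _)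

omit [Fintype 𝓧] in
lemma margXY_le_margX (hp : ∀ a, 0 ≤ p a) (x : 𝓧) (y : 𝓨) : margXY p x y ≤ margX p x :=
  single_le_sum (f := fun y => margXY p x y) (fun y _ => margXY_nonneg hp x y) (mem_univ y)

omit [Fintype 𝓨] in
lemma margXY_le_margY (hp : ∀ a, 0 ≤ p a) (x : 𝓧) (y : 𝓨) : margXY p x y ≤ margY p y :=
  single_le_sum (f := fun x => margXY p x y) (fun x _ => margXY_nonneg hp x y) (mem_univ x)

omit [Fintype 𝓧] in
lemma margXZ_le_margX (hp : ∀ a, 0 ≤ p a) (x : 𝓧) (z : 𝓩) : margXZ p x z ≤ margX p x :=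
  sum_le_sum fun y _ => single_le_sum (f := fun z => p (x, y, z)) (fun _ _ => hp _) (mem_univ z)

omit [Fintype 𝓧] [Fintype 𝓨] in
lemma margXY_pos (hp : ∀ a, 0 ≤ p a) {x : 𝓧} {y : 𝓨} {z : 𝓩} (h : 0 < p (x, y, z)) :
    0 < margXY p x y :=
  h.trans_le (single_le_sum (f := fun z => p (x, y, z)) (fun _ _ => hp _) (mem_univ z))

omit [Fintype 𝓨] [Fintype 𝓩] in
lemma margYZ_pos (hp : ∀ a, 0 ≤ p a) {x : 𝓧} {y : 𝓨} {z : 𝓩} (h : 0 < p (x, y, z)) :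
    0 < margYZ p y z :=
  h.trans_le (single_le_sum (f := fun x => p (x, y, z)) (fun _ _ => hp _) (mem_univ x))

omit [Fintype 𝓩] in
lemma margZ_pos (hp : ∀ a, 0 ≤ p a) {x : 𝓧} {y : 𝓨} {z : 𝓩} (h : 0 < p (x, y, z)) :
    0 < margZ p z :=
  h.trans_le <| (single_le_sum (f := fun y => p (x, y, z)) (fun _ _ => hp _) (mem_univ y)).trans <|
    single_le_sum (f := fun x => ∑ y, p (x, y, z)) (fun _ _ => sum_nonneg fun _ _ => hp _)
      (mem_univ x)

omit [Fintype 𝓨] in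
lemma condY_pos (hp : ∀ a, 0 ≤ p a) {x : 𝓧} {y : 𝓨} {z : 𝓩} (h : 0 < p (x, y, z)) :
    0 < condY p y z :=
  div_pos (margYZ_pos hp h) ((margXY_pos hp h).trans_le (margXY_le_margY hp x y))

lemma margX_mul_rmix (hp : ∀ a, 0 ≤ p a) (x : 𝓧) (z : 𝓩) :
    margX p x * rmix p x z = ∑ y, margXY p x y * condY p y z := by
  simp only [rmix, mul_sum]
  refine sum_congr rfl fun y _ => ?_
  split_ifs with h
  · field_simp [(h.trans_le (margXY_le_margX hp x y)).ne']
  · rw [le_antisymm (not_lt.1 h) (margXY_nonneg hp x y), zero_mul, mul_zero]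

lemma rmix_pos (hp : ∀ a, 0 ≤ p a) {x : 𝓧} {y : 𝓨} {z : 𝓩} (hx : 0 < margX p x)
    (h : 0 < p (x, y, z)) : 0 < rmix p x z := by
  refine pos_of_mul_pos_right ?_ hx.le
  rw [margX_mul_rmix hp]
  exact (mul_pos (margXY_pos hp h) (condY_pos hp h)).trans_le <|
    single_le_sum (fun y _ => mul_nonneg (margXY_nonneg hp x y) (condY_nonneg hp y z)) (mem_univ y)

lemma rmix_mem_CYhull (hp : ∀ a, 0 ≤ p a) {x : 𝓧} (hx : 0 < margX p x) :
    rmix p x ∈ CYhull p := by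
  set t := univ.filter fun y => 0 < margXY p x y
  have hrmix : rmix p x = ∑ y ∈ t, (margXY p x y / margX p x) • condY p y := by
    ext z
    rw [Finset.sum_apply]
    simp only [rmix, t, Pi.smul_apply, smul_eq_mul, sum_filter]
  have hweights : ∑ y ∈ t, margXY p x y / margX p x = 1 := by
    rw [← sum_div, sum_filter_of_ne fun y _ h => (margXY_nonneg hp x y).lt_of_ne' h]
    exact div_self hx.ne'
  rw [hrmix]
  refine (convex_convexHull ℝ _).sum_mem (fun y _ => div_nonneg (margXY_nonneg hp x y) hx.le)
    hweights fun y hy => subset_convexHull ℝ _ ⟨y, ?_, rfl⟩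
  exact (mem_filter.1 hy).2.trans_le (margXY_le_margY hp x y)

lemma sum_margX_mul_klDiv_rmix (hp : ∀ a, 0 ≤ p a) :
    (∑ x, if 0 < margX p x then ((margX p x : EReal) * klDiv (condX p x) (rmix p x)) else 0) =
      ((∑ x, ∑ z, margXZ p x z * Real.log (margXZ p x z / (margX p x * rmix p x z)) : ℝ)) := by
  push_cast
  refine sum_congr rfl fun x _ => ?_
  split_ifs with hx
  · refine (coe_mul_klDiv_div_eq hx fun z hz => ?_).trans (EReal.coe_finset_sum _ _)
    obtain ⟨y, -, hy⟩ := (sum_pos_iff_of_nonneg fun y _ => hp (x, y, z)).1 hz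
    exact rmix_pos hp hx hy
  · refine (sum_eq_zero fun z _ => ?_).symm
    have hxz : margXZ p x z = 0 :=
      le_antisymm ((margXZ_le_margX hp x z).trans (not_lt.1 hx)) (sum_nonneg fun _ _ => hp _)
    simp [hxz]

lemma sum_margXY_mul_klDiv_condY (hp : ∀ a, 0 ≤ p a) :
    (∑ x, ∑ y, if 0 < margXY p x y then
        ((margXY p x y : EReal) * klDiv (condXY p x y) (condY p y)) else 0) =
      ((∑ x, ∑ y, ∑ z, p (x, y, z) * Real.log (p (x, y, z) / (margXY p x y * condY p y z)) :
        ℝ)) := by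
  push_cast
  refine sum_congr rfl fun x _ => sum_congr rfl fun y _ => ?_
  split_ifs with hxy
  · exact (coe_mul_klDiv_div_eq hxy fun z hz => condY_pos hp hz).trans (EReal.coe_finset_sum _ _)
  · refine (sum_eq_zero fun z _ => ?_).symm
    have hxyz : p (x, y, z) = 0 :=
      le_antisymm (not_lt.1 fun h => hxy (margXY_pos hp h)) (hp _)
    simp [hxyz]

lemma margXZ_mul_log_le (hp : ∀ a, 0 ≤ p a) (x : 𝓧) (z : 𝓩) :
    margXZ p x z * Real.log (margXZ p x z / (margX p x * rmix p x z)) ≤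
      ∑ y, p (x, y, z) * Real.log (p (x, y, z) / (margXY p x y * condY p y z)) := by
  rw [margX_mul_rmix hp]
  exact Real.sum_mul_log_div_sum_le univ (fun y _ => hp _)
    (fun y _ => mul_nonneg (margXY_nonneg hp x y) (condY_nonneg hp y z))
    fun y _ h => mul_pos (margXY_pos hp h) (condY_pos hp h)

lemma mul_log_div_margXY_mul_condY (hp : ∀ a, 0 ≤ p a) (x : 𝓧) (y : 𝓨) (z : 𝓩) :
    p (x, y, z) * Real.log (p (x, y, z) / (margXY p x y * condY p y z)) =
      p (x, y, z) * Real.log (p (x, y, z) / (margXY p x y * margZ p z)) -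
        p (x, y, z) * Real.log (margYZ p y z / (margY p y * margZ p z)) := by
  rcases (hp (x, y, z)).eq_or_lt with h0 | h
  · simp [← h0]
  have hxy := margXY_pos hp h
  have hyz := margYZ_pos hp h
  have hy := hxy.trans_le (margXY_le_margY hp x y)
  have hz := margZ_pos hp h
  rw [← mul_sub, ← Real.log_div (by positivity) (by positivity), condY]
  congr 2
  field_simp

lemma miZXY_sub_miZY (hp : ∀ a, 0 ≤ p a) :
    miZXY p - miZY p =
      ∑ x, ∑ y, ∑ z, p (x, y, z) * Real.log (p (x, y, z) / (margXY p x y * condY p y z)) := by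
  have hmiZY : miZY p =
      ∑ x, ∑ y, ∑ z, p (x, y, z) * Real.log (margYZ p y z / (margY p y * margZ p z)) :=
    calc miZY p = ∑ y, ∑ z, ∑ x,
          p (x, y, z) * Real.log (margYZ p y z / (margY p y * margZ p z)) :=
          sum_congr rfl fun y _ => sum_congr rfl fun z _ => sum_mul _ _ _
      _ = _ := (sum_congr rfl fun y _ => sum_comm).trans sum_comm
  simp only [mul_log_div_margXY_mul_condY hp, sum_sub_distrib, hmiZY, miZXY]

lemma sum_margX_mul_klDiv_rmix_le (hp : ∀ a, 0 ≤ p a) :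
    (∑ x, if 0 < margX p x then ((margX p x : EReal) * klDiv (condX p x) (rmix p x)) else 0) ≤
      ∑ x, ∑ y, if 0 < margXY p x y then
        ((margXY p x y : EReal) * klDiv (condXY p x y) (condY p y)) else 0 := by
  rw [sum_margX_mul_klDiv_rmix hp, sum_margXY_mul_klDiv_condY hp, EReal.coe_le_coe_iff]
  calc _ ≤ ∑ x, ∑ z, ∑ y,
        p (x, y, z) * Real.log (p (x, y, z) / (margXY p x y * condY p y z)) :=
        sum_le_sum fun x _ => sum_le_sum fun z _ => margXZ_mul_log_le hp x z
    _ = _ := sum_congr rfl fun x _ => sum_comm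

end JointPMF

theorem convexity_step_general
    (p : 𝓧 × 𝓨 × 𝓩 → ℝ) (hp : IsPMF p) :
    (∑ x, if 0 < margX p x then
          ((margX p x : EReal) * klDiv (condX p x) (rmix p x)) else 0) ≤
      (∑ x, ∑ y, if 0 < margXY p x y then
          ((margXY p x y : EReal) * klDiv (condXY p x y) (condY p y)) else 0) ∧
    (∀ x, 0 < margX p x → rmix p x ∈ CYhull p) ∧
    (∑ x, if 0 < margX p x then
          ((margX p x : EReal) * ⨅ q ∈ CYhull p, klDiv (condX p x) q) else 0) ≤
      ((miZXY p - miZY p : ℝ) : EReal) := by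
  have hp0 := hp.1
  have hmix : ∀ x, 0 < margX p x → rmix p x ∈ CYhull p := fun x hx => rmix_mem_CYhull hp0 hx
  refine ⟨sum_margX_mul_klDiv_rmix_le hp0, hmix,
    le_trans (sum_le_sum fun x _ => ?_) ((sum_margX_mul_klDiv_rmix_le hp0).trans_eq ?_)⟩
  · split_ifs with hx
    · exact mul_le_mul_of_nonneg_left (iInf₂_le _ (hmix x hx)) (EReal.coe_nonneg.2 hx.le)
    · rfl
  · rw [sum_margXY_mul_klDiv_condY hp0, miZXY_sub_miZY hp0]

/-- Convexity step:
`Σ_{x,y : p(x,y)>0} p(x,y)·D(p(·|x,y)‖p(·|y)) ≥ Σ_{x : p(x)>0} p(x)·D(p(·|x)‖r_x)`,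
where `r_x = Σ_{y : p(y|x)>0} p(y|x)·p(·|y)`; moreover `r_x ∈ C_Y` for every `x` with
`p(x) > 0`, so `I(Z;X,Y) − I(Z;Y) ≥ Σ_{x : p(x)>0} p(x)·inf_{q ∈ C_Y} D(p(·|x)‖q)`. -/
theorem convexity_step
    [Nonempty 𝓧] [Nonempty 𝓨] [Nonempty 𝓩]
    (p : 𝓧 × 𝓨 × 𝓩 → ℝ) (hp : IsPMF p) :
    (∑ x, if 0 < margX p x then
          ((margX p x : EReal) * klDiv (condX p x) (rmix p x)) else 0) ≤
      (∑ x, ∑ y, if 0 < margXY p x y then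
          ((margXY p x y : EReal) * klDiv (condXY p x y) (condY p y)) else 0) ∧
    (∀ x, 0 < margX p x → rmix p x ∈ CYhull p) ∧
    (∑ x, if 0 < margX p x then
          ((margX p x : EReal) * ⨅ q ∈ CYhull p, klDiv (condX p x) q) else 0) ≤
      ((miZXY p - miZY p : ℝ) : EReal) :=
  convexity_step_general p hp
end

section
/- XOR is purely synergistic for I_red: let X and Y be independent uniformly distributed random variables on {0,1} and let Z = X ⊕ Y (addition modulo 2). Then I_red(Z;X,Y) = 0, and consequently the synergistic partial information I(Z;X,Y) − I(Z;X) − I(Z;Y) + I_red(Z;X,Y) equals I(Z;X,Y) = log 2 (one bit). -/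
open scoped BigOperators

variable {𝓧 𝓨 𝓩 : Type*} [Fintype 𝓧] [Fintype 𝓨] [Fintype 𝓩]

/-- The XOR joint distribution: `X, Y` independent uniform bits and `Z = X ⊕ Y`:
`p(x,y,z) = (1/4)·1[z = x ⊕ y]`. -/
noncomputable def xorJoint : Bool × Bool × Bool → ℝ :=
  fun t => if t.2.2 = xor t.1 t.2.1 then 1 / 4 else 0

/-!
Since `X` and `Z` are independent (and likewise `Y` and `Z`), every conditional `p(·|x)` and
`p(·|y)` equals `p_Z`. Hence `C_X = C_Y = {p_Z}`, each term of `I_pr` is `D(p_Z‖p_Z) - D(p_Z‖p_Z) = 0`,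
and `I(Z;X) = I(Z;Y) = 0`. Only `I(Z;X,Y)` survives: `Z` is a function of `(X,Y)`, so it carries
the full bit `log 2` of `Z`.
-/

open Real

theorem klDiv_self {α : Type*} [Fintype α] (u : α → ℝ) : klDiv u u = 0 := by
  simp [klDiv]

/-- The infimum is `0` when `s = {u}`, and `⊤` (whose `toReal` is also `0`) when `s` is empty. -/
theorem toReal_iInf_klDiv_of_subset_singleton {α : Type*} [Fintype α] {u : α → ℝ}
    {s : Set (α → ℝ)} (hs : s ⊆ {u}) : (⨅ q ∈ s, klDiv u q).toReal = 0 := by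
  rcases Set.subset_singleton_iff_eq.mp hs with rfl | rfl <;> simp [klDiv_self]

/-- The common shape of `IprXY` and `IprYX`. -/
theorem sum_projected_eq_zero {ι α : Type*} [Fintype ι] [Fintype α] (w : ι → ℝ)
    (c : ι → α → ℝ) {r : α → ℝ} {s : Set (α → ℝ)} (hc : ∀ i, 0 < w i → c i = r)
    (hs : s ⊆ {r}) :
    ∑ i, (if 0 < w i then
      w i * ((klDiv (c i) r).toReal - (⨅ q ∈ s, klDiv (c i) q).toReal) else 0) = 0 := by
  refine Finset.sum_eq_zero fun i _ => ?_
  split_ifs with hw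
  · rw [hc i hw, klDiv_self, toReal_iInf_klDiv_of_subset_singleton hs]
    simp
  · rfl

section Independence

variable {p : 𝓧 × 𝓨 × 𝓩 → ℝ}

theorem condX_eq_margZ (hXZ : ∀ x z, margXZ p x z = margX p x * margZ p z) {x : 𝓧}
    (hx : margX p x ≠ 0) : condX p x = margZ p := by
  funext z
  rw [condX, hXZ, mul_div_cancel_left₀ _ hx]

theorem condY_eq_margZ (hYZ : ∀ y z, margYZ p y z = margY p y * margZ p z) {y : 𝓨}
    (hy : margY p y ≠ 0) : condY p y = margZ p := by
  funext z
  rw [condY, hYZ, mul_div_cancel_left₀ _ hy]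

theorem CXhull_subset_margZ (hXZ : ∀ x z, margXZ p x z = margX p x * margZ p z) :
    CXhull p ⊆ {margZ p} :=
  (convex_singleton _).convexHull_subset_iff.mpr <| by
    rintro _ ⟨x, hx, rfl⟩
    exact condX_eq_margZ hXZ hx.ne'

theorem CYhull_subset_margZ (hYZ : ∀ y z, margYZ p y z = margY p y * margZ p z) :
    CYhull p ⊆ {margZ p} :=
  (convex_singleton _).convexHull_subset_iff.mpr <| by
    rintro _ ⟨y, hy, rfl⟩
    exact condY_eq_margZ hYZ hy.ne'

theorem miZX_eq_zero (hXZ : ∀ x z, margXZ p x z = margX p x * margZ p z) : miZX p = 0 := by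
  simp [miZX, hXZ]

theorem miZY_eq_zero (hYZ : ∀ y z, margYZ p y z = margY p y * margZ p z) : miZY p = 0 := by
  simp [miZY, hYZ]

theorem Ired_eq_zero (hXZ : ∀ x z, margXZ p x z = margX p x * margZ p z)
    (hYZ : ∀ y z, margYZ p y z = margY p y * margZ p z) : Ired p = 0 := by
  have hXY : IprXY p = 0 :=
    sum_projected_eq_zero _ _ (fun _ hx => condX_eq_margZ hXZ hx.ne') (CYhull_subset_margZ hYZ)
  have hYX : IprYX p = 0 :=
    sum_projected_eq_zero _ _ (fun _ hy => condY_eq_margZ hYZ hy.ne') (CXhull_subset_margZ hXZ)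
  rw [Ired, hXY, hYX, min_self]

end Independence

section Xor

theorem margX_xorJoint (x : Bool) : margX xorJoint x = 1 / 2 := by
  cases x <;> norm_num [margX, xorJoint, Fintype.sum_bool]

theorem margY_xorJoint (y : Bool) : margY xorJoint y = 1 / 2 := by
  cases y <;> norm_num [margY, xorJoint, Fintype.sum_bool]

theorem margZ_xorJoint (z : Bool) : margZ xorJoint z = 1 / 2 := by
  cases z <;> norm_num [margZ, xorJoint, Fintype.sum_bool]

theorem margXZ_xorJoint (x z : Bool) : margXZ xorJoint x z = 1 / 4 := by
  cases x <;> cases z <;> norm_num [margXZ, xorJoint, Fintype.sum_bool]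

theorem margYZ_xorJoint (y z : Bool) : margYZ xorJoint y z = 1 / 4 := by
  cases y <;> cases z <;> norm_num [margYZ, xorJoint, Fintype.sum_bool]

theorem margXY_xorJoint (x y : Bool) : margXY xorJoint x y = 1 / 4 := by
  cases x <;> cases y <;> norm_num [margXY, xorJoint, Fintype.sum_bool]

theorem margXZ_xorJoint_eq_mul (x z : Bool) :
    margXZ xorJoint x z = margX xorJoint x * margZ xorJoint z := by
  rw [margXZ_xorJoint, margX_xorJoint, margZ_xorJoint]
  norm_num

theorem margYZ_xorJoint_eq_mul (y z : Bool) :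
    margYZ xorJoint y z = margY xorJoint y * margZ xorJoint z := by
  rw [margYZ_xorJoint, margY_xorJoint, margZ_xorJoint]
  norm_num

theorem miZXY_xorJoint : miZXY xorJoint = log 2 := by
  have hterm : ∀ x y z : Bool, xorJoint (x, y, z) *
      log (xorJoint (x, y, z) / (margXY xorJoint x y * margZ xorJoint z)) =
        if z = xor x y then log 2 / 4 else 0 := by
    intro x y z
    rw [margXY_xorJoint, margZ_xorJoint, xorJoint]
    split_ifs <;> norm_num [div_eq_mul_inv, mul_comm]
  simp only [miZXY, hterm, Finset.sum_ite_eq', Finset.mem_univ, if_true, Finset.sum_const,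
    Finset.card_univ, Fintype.card_bool, nsmul_eq_mul]
  ring

end Xor

/-- XOR is purely synergistic for `I_red`: `I_red(Z;X,Y) = 0`, and consequently the
synergistic partial information `I(Z;X,Y) − I(Z;X) − I(Z;Y) + I_red(Z;X,Y)` equals
`I(Z;X,Y) = log 2` (one bit). -/
theorem xor_purely_synergistic :
    Ired xorJoint = 0 ∧
      miZXY xorJoint - miZX xorJoint - miZY xorJoint + Ired xorJoint = miZXY xorJoint ∧
      miZXY xorJoint = Real.log 2 := by
  have hIred := Ired_eq_zero margXZ_xorJoint_eq_mul margYZ_xorJoint_eq_mul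
  refine ⟨hIred, ?_, miZXY_xorJoint⟩
  rw [hIred, miZX_eq_zero margXZ_xorJoint_eq_mul, miZY_eq_zero margYZ_xorJoint_eq_mul]
  ring
end
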